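/- arXiv:1212.2924 — 5 statements merged into one kernel-verified Lean document; each statement's English description precedes it below -/
import Mathlib

section
/- Let m ≥ 2 and let ℓ : Fin m → Fin m → ℤ be any function. Let V be the free ℤ-module with basis {v_{ij} : i < j} indexed by the set P = {(i,j) ∈ Fin m × Fin m : i < j}. For each i ∈ Fin m define the relator r_i = −∑_{j < i} ℓ j i · v_{ji} + ∑_{j > i} ℓ i j · v_{ij} ∈ V. Then ∑_{i} r_i = 0, and consequently the quotient module V ⧸ Submodule.span ℤ {r_0, …, r_{m−1}} has rank at least (m−1)(m−2)/2. -/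
/-- The index set `P = {(i,j) : i < j}` of the basis `v_{ij}` of the free ℤ-module `V`. -/
def IndexP (m : ℕ) : Type := {p : Fin m × Fin m // p.1 < p.2}

instance (m : ℕ) : Fintype (IndexP m) := by unfold IndexP; infer_instance
instance (m : ℕ) : DecidableEq (IndexP m) := by unfold IndexP; infer_instance

/-- The relator `r_i = -∑_{j < i} ℓ j i • v_{ji} + ∑_{j > i} ℓ i j • v_{ij}`
in the free ℤ-module `V = (IndexP m → ℤ)` with standard basis `v_{ij} = Pi.single ⟨(i,j),_⟩ 1`. -/
def relatorR {m : ℕ} (ℓ : Fin m → Fin m → ℤ) (i : Fin m) : IndexP m → ℤ :=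
  -(∑ j : Fin m, if h : j < i then
      (ℓ j i) • Pi.single (⟨(j, i), h⟩ : IndexP m) (1 : ℤ) else 0) +
  (∑ j : Fin m, if h : i < j then
      (ℓ i j) • Pi.single (⟨(i, j), h⟩ : IndexP m) (1 : ℤ) else 0)

/-!
Each term `ℓ i j • v_{ij}` (with `i < j`) occurs in `r_i` with sign `+` and in `r_j` with sign `-`,
so the relators sum to zero. Hence one of the `m` relators lies in the span of the other `m - 1`,
the span has rank at most `m - 1`, and rank–nullity over `ℤ` bounds the rank of the quotient
below by `C(m,2) - (m - 1) = C(m-1,2)`.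
-/

universe u v

open Submodule in
theorem rank_span_range_le_of_sum_eq_zero {R M ι : Type*} [Ring R] [StrongRankCondition R]
    [AddCommGroup M] [Module R M] [Fintype ι] {v : ι → M}
    (hv : ∑ i, v i = 0) : Module.rank R (span R (Set.range v)) ≤ (Fintype.card ι - 1 : ℕ) := by
  classical
  rcases isEmpty_or_nonempty ι with _ | ⟨⟨i₀⟩⟩
  · exact (rank_span_le _).trans (by simp [Set.range_eq_empty])
  · have hv₀ : v i₀ = -∑ i ∈ Finset.univ.erase i₀, v i :=
      eq_neg_of_add_eq_zero_left ((Finset.add_sum_erase _ v (Finset.mem_univ i₀)).trans hv)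
    have hspan : span R (Set.range v) ≤ span R ((Finset.univ.erase i₀).image v : Set M) := by
      rw [span_le]
      rintro _ ⟨i, rfl⟩
      by_cases hi : i = i₀
      · subst hi
        rw [hv₀]
        exact neg_mem (sum_mem fun j hj => subset_span (Finset.mem_image_of_mem v hj))
      · exact subset_span (Finset.mem_image_of_mem v (Finset.mem_erase.2 ⟨hi, Finset.mem_univ i⟩))
    calc Module.rank R (span R (Set.range v))
        ≤ Module.rank R (span R ((Finset.univ.erase i₀).image v : Set M)) := rank_mono hspan
      _ ≤ ((Finset.univ.erase i₀).image v).card := rank_span_finset_le _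
      _ ≤ (Fintype.card ι - 1 : ℕ) := by
        rw [← Finset.card_univ, ← Finset.card_erase_of_mem (Finset.mem_univ i₀)]
        exact_mod_cast Finset.card_image_le

theorem sub_le_rank_quotient {R : Type v} {M : Type u} [Ring R] [HasRankNullity.{u} R]
    [AddCommGroup M] [Module R M] (N : Submodule R M) {a b : ℕ} (hM : Module.rank R M = a)
    (hN : Module.rank R N ≤ b) : ((a - b : ℕ) : Cardinal) ≤ Module.rank R (M ⧸ N) := by
  have hadd := N.rank_quotient_add_rank
  rw [hM] at hadd
  rw [← Cardinal.add_nat_le_add_nat_iff b, ← Nat.cast_add, Nat.sub_add_eq_max, Nat.mono_cast.map_max]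
  refine max_le ?_ le_add_self
  calc (a : Cardinal) = Module.rank R (M ⧸ N) + Module.rank R N := hadd.symm
    _ ≤ Module.rank R (M ⧸ N) + b := by gcongr

def linkingTerm {m : ℕ} (ℓ : Fin m → Fin m → ℤ) (i j : Fin m) : IndexP m → ℤ :=
  if h : i < j then ℓ i j • Pi.single (⟨(i, j), h⟩ : IndexP m) 1 else 0

theorem relatorR_eq {m : ℕ} (ℓ : Fin m → Fin m → ℤ) (i : Fin m) :
    relatorR ℓ i = -∑ j, linkingTerm ℓ j i + ∑ j, linkingTerm ℓ i j :=
  rfl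

theorem sum_relatorR {m : ℕ} (ℓ : Fin m → Fin m → ℤ) : ∑ i, relatorR ℓ i = 0 := by
  simp only [relatorR_eq, Finset.sum_add_distrib, Finset.sum_neg_distrib]
  rw [Finset.sum_comm, neg_add_cancel]

def indexPEquivSigma (m : ℕ) : IndexP m ≃ (Σ j : Fin m, Fin j) where
  toFun p := ⟨p.1.2, ⟨p.1.1, p.2⟩⟩
  invFun q := ⟨(⟨q.2, q.2.isLt.trans q.1.isLt⟩, q.1), q.2.isLt⟩

theorem card_indexP (m : ℕ) : Fintype.card (IndexP m) = m.choose 2 := by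
  rw [Fintype.card_congr (indexPEquivSigma m), Fintype.card_sigma, Nat.choose_two_right]
  simp only [Fintype.card_fin]
  rw [Fin.sum_univ_eq_sum_range (fun i => i) m, Finset.sum_range_id]

theorem choose_two_sub_pred (m : ℕ) : m.choose 2 - (m - 1) = (m - 1) * (m - 2) / 2 := by
  rcases m with _ | n
  · rfl
  · rw [Nat.choose_succ_succ', Nat.choose_one_right, Nat.choose_two_right]
    simp

theorem relators_sum_zero_and_rank_quotient_ge_general (m : ℕ)
    (ℓ : Fin m → Fin m → ℤ) :
    (∑ i : Fin m, relatorR ℓ i) = 0 ∧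
    (((m - 1) * (m - 2) / 2 : ℕ) : Cardinal) ≤
      Module.rank ℤ ((IndexP m → ℤ) ⧸ Submodule.span ℤ (Set.range (relatorR ℓ))) := by
  refine ⟨sum_relatorR ℓ, ?_⟩
  rw [← choose_two_sub_pred]
  refine sub_le_rank_quotient _ (by rw [rank_fun', card_indexP]) ?_
  simpa using rank_span_range_le_of_sum_eq_zero (R := ℤ) (sum_relatorR ℓ)

/-- The relators `r_i` sum to zero, and consequently the quotient of the free ℤ-module on
`{(i,j) : i < j}` by the span of the relators has rank at least `(m-1)(m-2)/2`. -/
theorem relators_sum_zero_and_rank_quotient_ge (m : ℕ) (hm : 2 ≤ m)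
    (ℓ : Fin m → Fin m → ℤ) :
    (∑ i : Fin m, relatorR ℓ i) = 0 ∧
    (((m - 1) * (m - 2) / 2 : ℕ) : Cardinal) ≤
      Module.rank ℤ ((IndexP m → ℤ) ⧸ Submodule.span ℤ (Set.range (relatorR ℓ))) :=
  relators_sum_zero_and_rank_quotient_ge_general m ℓ
end

section
/- Let G be a group generated by a subset S, i.e. Subgroup.closure S = ⊤. Then the commutator subgroup γ₂(G) equals the join of the subgroup closure of the set {⁅a, b⁆ : a ∈ S, b ∈ S} with the third lower central subgroup γ₃(G); in particular, the quotient γ₂(G)/γ₃(G) is generated by the images of the commutators ⁅a, b⁆ with a, b ∈ S. -/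
/-!
Every subgroup `K` with `γ₃(G) ≤ K ≤ γ₂(G)` is normal, since `⁅K, G⁆ ≤ ⁅γ₂(G), G⁆ = γ₃(G)`.
Taking `K = ⟨⁅a, b⁆ | a, b ∈ S⟩ ⊔ γ₃(G)`, the images of the generators pairwise commute in `G ⧸ K`,
so `G ⧸ K` is abelian and `γ₂(G) ≤ K`.
-/

open scoped commutatorElement

namespace Subgroup

variable {G : Type*} [Group G]

theorem commutator_closure_le_of_commutatorElement_mem {S T : Set G} {K : Subgroup G} [K.Normal]
    (h : ∀ a ∈ S, ∀ b ∈ T, ⁅a, b⁆ ∈ K) : ⁅closure S, closure T⁆ ≤ K := by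
  rw [← QuotientGroup.ker_mk' K, ← map_eq_bot_iff, map_commutator, MonoidHom.map_closure,
    MonoidHom.map_closure, commutator_eq_bot_iff_le_centralizer, centralizer_closure, closure_le]
  rintro _ ⟨a, ha, rfl⟩
  rw [SetLike.mem_coe, mem_centralizer_iff]
  rintro _ ⟨b, hb, rfl⟩
  have hab : QuotientGroup.mk' K ⁅a, b⁆ = 1 := (QuotientGroup.eq_one_iff _).mpr (h a ha b hb)
  rw [map_commutatorElement, commutatorElement_eq_one_iff_commute] at hab
  exact hab.symm.eq

theorem normal_of_le_of_commutator_top_le {H L : Subgroup G} (hHL : H ≤ L) (hL : ⁅L, ⊤⁆ ≤ H) :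
    H.Normal :=
  commutator_top_right_le_iff.mp ((commutator_mono hHL le_rfl).trans hL)

end Subgroup

open Subgroup in
/-- If a group `G` is generated by a subset `S`, then the commutator subgroup
`γ₂(G) = lowerCentralSeries G 1` is the join of the subgroup generated by the commutators
`⁅a, b⁆` with `a, b ∈ S` and the third lower central subgroup `γ₃(G) = lowerCentralSeries G 2`;
in particular `γ₂(G)/γ₃(G)` is generated by the images of these commutators. -/
theorem lcs2_eq_closure_commutators_sup_lcs3 {G : Type*} [Group G] (S : Set G)
    (hS : Subgroup.closure S = ⊤) :
    (⊤ : Subgroup G).lowerCentralSeries 1 =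
      Subgroup.closure {x : G | ∃ a ∈ S, ∃ b ∈ S, x = ⁅a, b⁆} ⊔ (⊤ : Subgroup G).lowerCentralSeries 2 := by
  set K := closure {x : G | ∃ a ∈ S, ∃ b ∈ S, x = ⁅a, b⁆} ⊔ (⊤ : Subgroup G).lowerCentralSeries 2
  have hK_le : K ≤ (⊤ : Subgroup G).lowerCentralSeries 1 := by
    refine sup_le ?_ (Subgroup.lowerCentralSeries_antitone ⊤ (by norm_num))
    rw [closure_le]
    rintro _ ⟨a, -, b, -, rfl⟩
    exact commutator_mem_commutator (mem_top a) (mem_top b)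
  have : K.Normal := normal_of_le_of_commutator_top_le hK_le le_sup_right
  refine le_antisymm ?_ hK_le
  rw [top_lowerCentralSeries_one, commutator_def, ← hS]
  exact commutator_closure_le_of_commutatorElement_mem fun a ha b hb ↦
    mem_sup_left (subset_closure ⟨a, ha, b, hb, rfl⟩)
end

section
/- Let F be the free group on m generators x_1, …, x_m (F = FreeGroup (Fin m)). Then the quotient γ₂(F)/γ₃(F) of the second by the third lower central subgroup is a free abelian group of rank m(m−1)/2, and the images of the basic commutators ⁅x_i, x_j⁆ for i < j form a basis. -/
/-!
Commutation induces a bimultiplicative map `G × G → γ₂(G)/γ₃(G)` whose image generates, so for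
a free group on a linearly ordered set the quotient is generated by the classes of the basic
commutators `⁅xᵢ, xⱼ⁆`, `i < j`. They are independent because they are detected by a
Heisenberg-type group: `(α →₀ ℤ) × ({(i, j) | i < j} →₀ ℤ)` with the product
`(a, u) (b, v) = (a + b, u + v + β(a, b))`, where `β(eᵢ, eⱼ) = e_{ij}` for `i < j` and `0`
otherwise. The homomorphism from the free group sending `xᵢ` to `(eᵢ, 0)` kills `γ₃`, and on
`γ₂` its second coordinate sends `⁅xᵢ, xⱼ⁆` to `β(eᵢ, eⱼ) - β(eⱼ, eᵢ) = e_{ij}`.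
-/

open scoped commutatorElement

lemma commutatorElement_mem_lcs_one {G : Type*} [Group G] (a b : G) :
    ⁅a, b⁆ ∈ (⊤ : Subgroup G).lowerCentralSeries 1 := by
  rw [Subgroup.top_lowerCentralSeries_one, commutator_def]
  exact Subgroup.commutator_mem_commutator (Subgroup.mem_top a) (Subgroup.mem_top b)

open Subgroup

lemma commutatorElement_mem_lcs_two_of_mem_left {G : Type*} [Group G] {c : G}
    (hc : c ∈ (⊤ : Subgroup G).lowerCentralSeries 1) (x : G) :
    ⁅c, x⁆ ∈ (⊤ : Subgroup G).lowerCentralSeries 2 :=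
  commutator_mem_commutator hc (mem_top x)

lemma commutatorElement_mem_lcs_two_of_mem_right {G : Type*} [Group G] {c : G}
    (hc : c ∈ (⊤ : Subgroup G).lowerCentralSeries 1) (x : G) :
    ⁅x, c⁆ ∈ (⊤ : Subgroup G).lowerCentralSeries 2 := by
  rw [← commutatorElement_inv]
  exact inv_mem (commutatorElement_mem_lcs_two_of_mem_left hc x)

abbrev LowerCentralQuotient (G : Type*) [Group G] : Type _ :=
  (⊤ : Subgroup G).lowerCentralSeries 1 ⧸
    ((⊤ : Subgroup G).lowerCentralSeries 2).subgroupOf ((⊤ : Subgroup G).lowerCentralSeries 1)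

namespace LowerCentralQuotient

variable {G : Type*} [Group G]

lemma mk_commutatorElement_eq_one (x : G) (c : (⊤ : Subgroup G).lowerCentralSeries 1) :
    (QuotientGroup.mk ⟨⁅x, c⁆, commutatorElement_mem_lcs_one x c⟩ : LowerCentralQuotient G) = 1 :=
  (QuotientGroup.eq_one_iff _).mpr
    (mem_subgroupOf.mpr (commutatorElement_mem_lcs_two_of_mem_right c.2 x))

instance : CommGroup (LowerCentralQuotient G) where
  mul_comm a b := by
    induction a using QuotientGroup.induction_on with | H a =>
    induction b using QuotientGroup.induction_on with | H b =>
    have hab : a * b = ⟨⁅(a : G), b⁆, commutatorElement_mem_lcs_one _ _⟩ * (b * a) := by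
      ext; simp only [Subgroup.coe_mul, commutatorElement_def]; group
    rw [← QuotientGroup.mk_mul, hab, QuotientGroup.mk_mul, mk_commutatorElement_eq_one,
      one_mul, QuotientGroup.mk_mul]

def commutatorClass (a b : G) : LowerCentralQuotient G :=
  QuotientGroup.mk ⟨⁅a, b⁆, commutatorElement_mem_lcs_one a b⟩

lemma commutatorClass_self (a : G) : commutatorClass a a = 1 := by
  simp only [commutatorClass, commutatorElement_self]
  exact QuotientGroup.mk_one _

lemma commutatorClass_inv (a b : G) : (commutatorClass a b)⁻¹ = commutatorClass b a := by
  rw [commutatorClass, ← QuotientGroup.mk_inv]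
  exact congrArg _ (Subtype.ext (commutatorElement_inv a b))

lemma commutatorClass_mul_left (a a' b : G) :
    commutatorClass (a * a') b = commutatorClass a b * commutatorClass a' b := by
  let c : (⊤ : Subgroup G).lowerCentralSeries 1 := ⟨⁅a', b⁆, commutatorElement_mem_lcs_one _ _⟩
  have h : (⟨⁅a * a', b⁆, commutatorElement_mem_lcs_one _ _⟩ :
      (⊤ : Subgroup G).lowerCentralSeries 1) =
      ⟨⁅a, c⁆, commutatorElement_mem_lcs_one _ _⟩ * c *
        ⟨⁅a, b⁆, commutatorElement_mem_lcs_one _ _⟩ := by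
    ext; simp only [c, Subgroup.coe_mul, commutatorElement_def]; group
  rw [commutatorClass, h, QuotientGroup.mk_mul, QuotientGroup.mk_mul, mk_commutatorElement_eq_one,
    one_mul, mul_comm]
  rfl

lemma commutatorClass_mul_right (a b b' : G) :
    commutatorClass a (b * b') = commutatorClass a b * commutatorClass a b' := by
  let c : (⊤ : Subgroup G).lowerCentralSeries 1 := ⟨⁅a, b'⁆, commutatorElement_mem_lcs_one _ _⟩
  have h : (⟨⁅a, b * b'⁆, commutatorElement_mem_lcs_one _ _⟩ :
      (⊤ : Subgroup G).lowerCentralSeries 1) =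
      ⟨⁅a, b⁆, commutatorElement_mem_lcs_one _ _⟩ *
        ⟨⁅b, c⁆, commutatorElement_mem_lcs_one _ _⟩ * c := by
    ext; simp only [c, Subgroup.coe_mul, commutatorElement_def]; group
  rw [commutatorClass, h, QuotientGroup.mk_mul, QuotientGroup.mk_mul, mk_commutatorElement_eq_one,
    mul_one]
  rfl

def commutatorHom : G →* G →* LowerCentralQuotient G :=
  MonoidHom.mk' (fun a => MonoidHom.mk' (commutatorClass a) (commutatorClass_mul_right a))
    fun a a' => MonoidHom.ext (commutatorClass_mul_left a a')

lemma hom_ext {M : Type*} [Group M] {f g : LowerCentralQuotient G →* M}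
    (h : ∀ a b, f (commutatorClass a b) = g (commutatorClass a b)) : f = g := by
  refine QuotientGroup.monoidHom_ext _ (MonoidHom.ext fun x => ?_)
  obtain ⟨x, hx⟩ := x
  induction hx using Subgroup.closure_induction with
  | mem x hx =>
    obtain ⟨a, -, b, -, rfl⟩ := hx
    exact h a b
  | one => exact (map_one _).trans (map_one _).symm
  | mul x y hx hy ihx ihy =>
    have := congrArg₂ (· * ·) ihx ihy
    rwa [← map_mul, ← map_mul] at this
  | inv x hx ihx =>
    have := congrArg (·⁻¹) ihx
    rwa [← map_inv, ← map_inv] at this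

lemma hom_ext_freeGroup {α M : Type*} [LinearOrder α] [CommGroup M]
    {f g : LowerCentralQuotient (FreeGroup α) →* M}
    (h : ∀ i j, i < j → f (commutatorClass (.of i) (.of j)) = g (commutatorClass (.of i) (.of j))) :
    f = g := by
  have h_gen (i j : α) :
      f (commutatorClass (.of i) (.of j)) = g (commutatorClass (.of i) (.of j)) := by
    rcases lt_trichotomy i j with hij | rfl | hji
    · exact h i j hij
    · simp [commutatorClass_self]
    · rw [← commutatorClass_inv, map_inv, map_inv, h j i hji]
  have : commutatorHom.compr₂ f = commutatorHom.compr₂ g :=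
    FreeGroup.ext_hom _ _ fun i => FreeGroup.ext_hom _ _ (h_gen i)
  exact hom_ext fun a b => DFunLike.congr_fun (DFunLike.congr_fun this a) b

end LowerCentralQuotient

@[ext]
structure HeisenbergGroup {A M : Type*} [AddCommGroup A] [AddCommGroup M] (β : A →+ A →+ M) where
  fst : A
  snd : M

namespace HeisenbergGroup

variable {A M : Type*} [AddCommGroup A] [AddCommGroup M] {β : A →+ A →+ M}

instance : Mul (HeisenbergGroup β) := ⟨fun x y => ⟨x.fst + y.fst, x.snd + y.snd + β x.fst y.fst⟩⟩
instance : One (HeisenbergGroup β) := ⟨⟨0, 0⟩⟩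
instance : Inv (HeisenbergGroup β) := ⟨fun x => ⟨-x.fst, -x.snd + β x.fst x.fst⟩⟩

@[simp] lemma fst_mul (x y : HeisenbergGroup β) : (x * y).fst = x.fst + y.fst := rfl
@[simp] lemma snd_mul (x y : HeisenbergGroup β) :
    (x * y).snd = x.snd + y.snd + β x.fst y.fst := rfl
@[simp] lemma fst_one : (1 : HeisenbergGroup β).fst = 0 := rfl
@[simp] lemma snd_one : (1 : HeisenbergGroup β).snd = 0 := rfl
@[simp] lemma fst_inv (x : HeisenbergGroup β) : x⁻¹.fst = -x.fst := rfl
@[simp] lemma snd_inv (x : HeisenbergGroup β) : x⁻¹.snd = -x.snd + β x.fst x.fst := rfl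

instance : Group (HeisenbergGroup β) where
  mul_assoc x y z := by
    ext <;> simp only [fst_mul, snd_mul, map_add, AddMonoidHom.add_apply] <;> abel
  one_mul x := by ext <;> simp
  mul_one x := by ext <;> simp
  inv_mul_cancel x := by ext <;> simp

lemma commutatorElement_eq (x y : HeisenbergGroup β) :
    ⁅x, y⁆ = ⟨0, β x.fst y.fst - β y.fst x.fst⟩ := by
  ext
  · simp [commutatorElement_def]
  · simp only [commutatorElement_def, snd_mul, snd_inv, fst_mul, fst_inv, map_add, map_neg,
      AddMonoidHom.add_apply, add_neg_cancel_comm]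
    abel

def fstHom : HeisenbergGroup β →* Multiplicative A where
  toFun x := .ofAdd x.fst
  map_one' := rfl
  map_mul' _ _ := rfl

lemma commute_of_fst_eq_zero {x : HeisenbergGroup β} (hx : x.fst = 0) (y : HeisenbergGroup β) :
    Commute x y := by
  ext <;> simp [hx, add_comm]

variable {G : Type*} [Group G] (f : G →* HeisenbergGroup β)

lemma fst_map_eq_zero_of_mem_lcs_one {x : G} (hx : x ∈ (⊤ : Subgroup G).lowerCentralSeries 1) :
    (f x).fst = 0 :=
  congrArg Multiplicative.toAdd (Abelianization.commutator_subset_ker (fstHom.comp f) hx)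

lemma lcs_two_le_ker : (⊤ : Subgroup G).lowerCentralSeries 2 ≤ f.ker := by
  refine commutator_le.mpr fun x hx y _ => ?_
  rw [MonoidHom.mem_ker, map_commutatorElement, commutatorElement_eq_one_iff_mul_comm]
  exact commute_of_fst_eq_zero (fst_map_eq_zero_of_mem_lcs_one f hx) (f y)

def lowerCentralLift : LowerCentralQuotient G →* Multiplicative M :=
  QuotientGroup.lift _
    (MonoidHom.mk' (fun x => .ofAdd (f x).snd) fun x y => by
      rw [Subgroup.coe_mul, map_mul, snd_mul, fst_map_eq_zero_of_mem_lcs_one f x.2, map_zero,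
        AddMonoidHom.zero_apply, add_zero, ofAdd_add])
    fun x hx => by
      rw [MonoidHom.mem_ker, MonoidHom.mk'_apply,
        MonoidHom.mem_ker.mp (lcs_two_le_ker f (mem_subgroupOf.mp hx)), snd_one, ofAdd_zero]

lemma lowerCentralLift_commutatorClass (a b : G) :
    lowerCentralLift f (LowerCentralQuotient.commutatorClass a b) =
      .ofAdd (β (f a).fst (f b).fst - β (f b).fst (f a).fst) := by
  change Multiplicative.ofAdd (f ⁅a, b⁆).snd = _
  rw [map_commutatorElement, commutatorElement_eq]

end HeisenbergGroup

namespace FreeGroup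

open HeisenbergGroup LowerCentralQuotient

variable {α : Type*} [LinearOrder α]

variable (α) in
noncomputable def ltBilin : (α →₀ ℤ) →+ (α →₀ ℤ) →+ ({p : α × α // p.1 < p.2} →₀ ℤ) :=
  Finsupp.liftAddHom fun i => zmultiplesHom _ <| Finsupp.liftAddHom fun j => zmultiplesHom _ <|
    if h : i < j then Finsupp.single ⟨(i, j), h⟩ 1 else 0

lemma ltBilin_single_single (i j : α) :
    ltBilin α (.single i 1) (.single j 1) =
      if h : i < j then Finsupp.single ⟨(i, j), h⟩ 1 else 0 := by
  simp [ltBilin]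

variable (α) in
noncomputable def toHeisenberg : FreeGroup α →* HeisenbergGroup (ltBilin α) :=
  FreeGroup.lift fun i => ⟨.single i 1, 0⟩

lemma lowerCentralLift_commutatorClass_of_of {i j : α} (h : i < j) :
    lowerCentralLift (toHeisenberg α) (commutatorClass (of i) (of j)) =
      .ofAdd (Finsupp.single ⟨(i, j), h⟩ 1) := by
  rw [lowerCentralLift_commutatorClass, toHeisenberg, lift_apply_of, lift_apply_of]
  simp [ltBilin_single_single, h, h.not_gt]

variable (α) in
noncomputable def basicCommutatorHom : Multiplicative ({p : α × α // p.1 < p.2} →₀ ℤ) →*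
    LowerCentralQuotient (FreeGroup α) :=
  AddMonoidHom.toMultiplicativeLeft <| Finsupp.liftAddHom fun p =>
    zmultiplesHom _ (.ofMul (commutatorClass (of p.1.1) (of p.1.2)))

lemma basicCommutatorHom_single (p : {p : α × α // p.1 < p.2}) :
    basicCommutatorHom α (.ofAdd (.single p 1)) = commutatorClass (of p.1.1) (of p.1.2) := by
  simp [basicCommutatorHom]

variable (α) in
noncomputable def lowerCentralQuotientEquiv :
    LowerCentralQuotient (FreeGroup α) ≃* Multiplicative ({p : α × α // p.1 < p.2} →₀ ℤ) :=
  MonoidHom.toMulEquiv (lowerCentralLift (toHeisenberg α)) (basicCommutatorHom α)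
    (hom_ext_freeGroup fun i j h => by
      rw [MonoidHom.comp_apply, lowerCentralLift_commutatorClass_of_of h,
        basicCommutatorHom_single, MonoidHom.id_apply])
    (by
      ext p : 2
      exact (congrArg _ (basicCommutatorHom_single p)).trans
        (lowerCentralLift_commutatorClass_of_of p.2))

end FreeGroup

/-- Hall's basis theorem in the first nontrivial case: for the free group `F` on `m`
generators `x_i`, the quotient `γ₂(F)/γ₃(F)` is free abelian of rank `m(m-1)/2`, with basis
the images of the basic commutators `⁅x_i, x_j⁆` for `i < j`. -/
theorem freeGroup_lcs2_quotient_lcs3_free_abelian (m : ℕ) :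
    ∃ e : ((⊤ : Subgroup (FreeGroup (Fin m))).lowerCentralSeries 1 ⧸
        ((⊤ : Subgroup (FreeGroup (Fin m))).lowerCentralSeries 2).subgroupOf
          ((⊤ : Subgroup (FreeGroup (Fin m))).lowerCentralSeries 1)) ≃*
        Multiplicative ({p : Fin m × Fin m // p.1 < p.2} →₀ ℤ),
      ∀ (i j : Fin m) (h : i < j),
        e (QuotientGroup.mk
            (⟨⁅FreeGroup.of i, FreeGroup.of j⁆, commutatorElement_mem_lcs_one _ _⟩ :
              (⊤ : Subgroup (FreeGroup (Fin m))).lowerCentralSeries 1)) =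
          Multiplicative.ofAdd (Finsupp.single (⟨(i, j), h⟩ :
            {p : Fin m × Fin m // p.1 < p.2}) (1 : ℤ)) :=
  ⟨FreeGroup.lowerCentralQuotientEquiv (Fin m), fun _ _ h =>
    FreeGroup.lowerCentralLift_commutatorClass_of_of h⟩
end

section
/- Let m ≥ 2 and let F = FreeGroup (Fin m) with generators x_0, …, x_{m−1}. Let ℓ : Fin m → Fin m → ℤ satisfy ℓ i j = ℓ j i for all i ≠ j, and let λ : Fin m → F be elements such that for each i, λ i · (∏_{j ≠ i} (x_j)^{ℓ i j})⁻¹ ∈ γ₂(F), where the product is over j ≠ i in increasing order. Let π be the quotient of F by the normal closure of the set {⁅x_i, λ i⁆ : i ∈ Fin m} ∪ γ₃(F), i.e. the group presented by ⟨x_1,…,x_m ∣ [x_1,λ_1], …, [x_m,λ_m], γ₃(F)⟩. Then there exists a surjective group homomorphism from γ₂(π) onto the free abelian group ℤ^{(m−1)(m−2)/2} (note that γ₃(π) is trivial, so γ₂(π) = γ₂(π)/γ₃(π) is abelian). -/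
/-!
Write `P = {(j, k) | j < k}` and `B(v, w)_{jk} = v_j w_k` for `v, w ∈ ℤ^m`. On `ℤ^m × ℤ^P` the
product `(v, a)(w, b) = (v + w, a + b + B(v, w))` gives a group of class 2 whose commutators are
`(0, B(v, w) - B(w, v))`, i.e. `(0, v ∧ w)` in Plücker coordinates. Send `x_i ↦ (e_i, 0)`. Modulo
`γ₂(F)` the element `λ_i` is `μ_i = ∑_{j ≠ i} ℓ_ij e_j`, so the relator `⁅x_i, λ_i⁆` goes to
`(0, e_i ∧ μ_i)` (`relatorVec`). By the symmetry of `ℓ` these `m` vectors sum to zero, so they span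
a lattice of rank at most `m - 1`, and Smith normal form gives a surjection `L : ℤ^P → ℤ^N`,
`N = C(m, 2) - (m - 1) = C(m - 1, 2)`, killing all of them. Replacing `B` by `L ∘ B`, the map
factors through `π`; on `γ₂(π)` the second coordinate is a homomorphism, and it is onto because
`⁅x_j, x_k⁆ ↦ L(e_j ∧ e_k)` and the `e_j ∧ e_k` form a basis of `ℤ^P`.
-/

open scoped commutatorElement in
/-- The group `π = ⟨x_1,…,x_m ∣ [x_1,λ_1], …, [x_m,λ_m], γ₃(F)⟩`: the quotient of the free
group `F` on `m` generators by the normal closure of the relators `⁅x_i, λ_i⁆` together with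
the third lower central subgroup `γ₃(F) = lowerCentralSeries F 2`. -/
def MilnorQuotient {m : ℕ} (lam : Fin m → FreeGroup (Fin m)) : Type :=
  FreeGroup (Fin m) ⧸ Subgroup.normalClosure
    ((Set.range fun i => ⁅FreeGroup.of i, lam i⁆) ∪
      (((⊤ : Subgroup (FreeGroup (Fin m))).lowerCentralSeries 2 : Subgroup (FreeGroup (Fin m))) : Set (FreeGroup (Fin m))))

instance {m : ℕ} (lam : Fin m → FreeGroup (Fin m)) : Group (MilnorQuotient lam) := by
  unfold MilnorQuotient; infer_instance

open scoped commutatorElement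

open Module

@[ext]
structure Heisenberg {V W : Type*} [AddCommGroup V] [AddCommGroup W] (β : V →+ V →+ W) where
  fst : V
  snd : W

namespace Heisenberg

variable {V W : Type*} [AddCommGroup V] [AddCommGroup W] {β : V →+ V →+ W}

instance : Mul (Heisenberg β) := ⟨fun a b => ⟨a.fst + b.fst, a.snd + b.snd + β a.fst b.fst⟩⟩
instance : One (Heisenberg β) := ⟨⟨0, 0⟩⟩
instance : Inv (Heisenberg β) := ⟨fun a => ⟨-a.fst, -a.snd + β a.fst a.fst⟩⟩

@[simp] lemma mul_fst (a b : Heisenberg β) : (a * b).fst = a.fst + b.fst := rfl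
@[simp] lemma mul_snd (a b : Heisenberg β) : (a * b).snd = a.snd + b.snd + β a.fst b.fst := rfl
@[simp] lemma one_fst : (1 : Heisenberg β).fst = 0 := rfl
@[simp] lemma one_snd : (1 : Heisenberg β).snd = 0 := rfl
@[simp] lemma inv_fst (a : Heisenberg β) : a⁻¹.fst = -a.fst := rfl
@[simp] lemma inv_snd (a : Heisenberg β) : a⁻¹.snd = -a.snd + β a.fst a.fst := rfl

instance : Group (Heisenberg β) where
  mul_assoc a b c := by
    ext <;> simp only [mul_fst, mul_snd, map_add, AddMonoidHom.add_apply] <;> abel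
  one_mul a := by ext <;> simp
  mul_one a := by ext <;> simp
  inv_mul_cancel a := by ext <;> simp

lemma commutator_eq (a b : Heisenberg β) :
    ⁅a, b⁆ = ⟨0, β a.fst b.fst - β b.fst a.fst⟩ := by
  rw [commutatorElement_def]
  ext
  · simp
  · simp [AddMonoidHom.add_apply]
    abel

variable (β) in
def fstHom : Heisenberg β →* Multiplicative V where
  toFun a := Multiplicative.ofAdd a.fst
  map_one' := rfl
  map_mul' _ _ := rfl

lemma fst_eq_zero_of_mem_commutator {G : Type*} [Group G] (f : G →* Heisenberg β) {x : G}
    (hx : x ∈ commutator G) : (f x).fst = 0 :=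
  Abelianization.commutator_subset_ker ((fstHom β).comp f) hx

lemma lowerCentralSeries_two_eq_bot : (⊤ : Subgroup (Heisenberg β)).lowerCentralSeries 2 = ⊥ := by
  rw [eq_bot_iff, Subgroup.lowerCentralSeries_succ, Subgroup.commutator_def, Subgroup.closure_le]
  rintro _ ⟨a, ha, b, -, rfl⟩
  have ha0 : a.fst = 0 := fst_eq_zero_of_mem_commutator (MonoidHom.id _) ha
  simp [commutator_eq, ha0, Heisenberg.ext_iff]

lemma lowerCentralSeries_two_le_ker {G : Type*} [Group G] (f : G →* Heisenberg β) :
    (⊤ : Subgroup G).lowerCentralSeries 2 ≤ f.ker := by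
  intro x hx
  have hfx : f x ∈ (⊤ : Subgroup (Heisenberg β)).lowerCentralSeries 2 := by
    have := Subgroup.mem_map_of_mem f hx
    rw [Subgroup.map_lowerCentralSeries] at this
    exact Subgroup.lowerCentralSeries_mono 2 le_top this
  rwa [lowerCentralSeries_two_eq_bot] at hfx

def sndOnCommutator {G : Type*} [Group G] (f : G →* Heisenberg β) :
    commutator G →* Multiplicative W where
  toFun x := Multiplicative.ofAdd (f x).snd
  map_one' := by simp
  map_mul' x y := by simp [fst_eq_zero_of_mem_commutator f x.2]

end Heisenberg

theorem finrank_span_range_le_card_sub_one_of_sum_eq_zero {R M ι : Type*} [Ring R]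
    [StrongRankCondition R] [AddCommGroup M] [Module R M] [Fintype ι]
    {v : ι → M} (hv : ∑ i, v i = 0) :
    finrank R (Submodule.span R (Set.range v)) ≤ Fintype.card ι - 1 := by
  classical
  rcases isEmpty_or_nonempty ι with _ | ⟨⟨i₀⟩⟩
  · have := nontrivial_of_invariantBasisNumber R
    rw [Set.range_eq_empty v, Submodule.span_empty, finrank_bot]
    exact Nat.zero_le _
  · set s := (Finset.univ.erase i₀).image v
    have hspan : Submodule.span R (Set.range v) = Submodule.span R (s : Set M) := by
      refine le_antisymm (Submodule.span_le.mpr ?_) (Submodule.span_mono (by simp [s]))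
      rintro _ ⟨i, rfl⟩
      by_cases hi : i = i₀
      · have hvi : v i = -∑ j ∈ Finset.univ.erase i₀, v j := by
          rw [eq_neg_iff_add_eq_zero, hi, Finset.add_sum_erase _ _ (Finset.mem_univ _), hv]
        rw [hvi, SetLike.mem_coe]
        refine neg_mem (Submodule.sum_mem _ fun j hj => Submodule.subset_span ?_)
        exact Finset.mem_coe.mpr (Finset.mem_image_of_mem v hj)
      · exact Submodule.subset_span
          (Finset.mem_coe.mpr (Finset.mem_image_of_mem v (by simpa using hi)))
    calc finrank R (Submodule.span R (Set.range v))
        ≤ s.card := hspan ▸ finrank_span_finset_le_card s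
      _ ≤ (Finset.univ.erase i₀).card := Finset.card_image_le
      _ = Fintype.card ι - 1 := by simp [Finset.card_erase_of_mem]

theorem Submodule.exists_surjective_linearMap_le_ker {R M : Type*} [CommRing R] [IsDomain R]
    [IsPrincipalIdealRing R] [AddCommGroup M] [Module R M] [Module.Free R M] [Module.Finite R M]
    (S : Submodule R M) {N : ℕ} (hN : N + finrank R S ≤ finrank R M) :
    ∃ L : M →ₗ[R] (Fin N → R), Function.Surjective L ∧ S ≤ LinearMap.ker L := by
  classical
  obtain ⟨n, snf⟩ := S.smithNormalForm (Module.Free.chooseBasis R M)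
  have hcard : N ≤ Fintype.card {i // i ∉ Set.range snf.f} := by
    have hn : finrank R S = n := by simpa using finrank_eq_card_basis snf.bN
    rw [Fintype.card_subtype_compl, Set.card_range_of_injective snf.f.injective, Fintype.card_fin,
      ← finrank_eq_card_basis snf.bM]
    omega
  obtain ⟨e⟩ := Function.Embedding.nonempty_of_card_le
    (α := Fin N) (β := {i // i ∉ Set.range snf.f}) (by rwa [Fintype.card_fin])
  -- The `snf.bM`-coordinates indexed outside `range snf.f` vanish on `S`.
  refine ⟨LinearMap.funLeft R R (Subtype.val ∘ e) ∘ₗ snf.bM.equivFun.toLinearMap,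
    (LinearMap.funLeft_surjective_of_injective R R _ (Subtype.val_injective.comp e.injective)).comp
      snf.bM.equivFun.surjective, fun s hs => ?_⟩
  funext k
  exact snf.repr_eq_zero_of_notMem_range ⟨s, hs⟩ (e k).2

section PairCoordinates

variable {ι : Type*} [LinearOrder ι]

def pairProd : (ι → ℤ) →+ (ι → ℤ) →+ ({p : ι × ι // p.1 < p.2} → ℤ) :=
  AddMonoidHom.mk' (fun v => AddMonoidHom.mk' (fun w p => v p.1.1 * w p.1.2)
    fun w w' => by funext p; simp [mul_add])
    fun v v' => by ext w p; simp [add_mul]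

@[simp] lemma pairProd_apply (v w : ι → ℤ) (p : {p : ι × ι // p.1 < p.2}) :
    pairProd v w p = v p.1.1 * w p.1.2 := rfl

lemma pairProd_single_sub_pairProd_single {j k : ι} (h : j < k) :
    pairProd (Pi.single j 1) (Pi.single k 1) - pairProd (Pi.single k 1) (Pi.single j 1) =
      Pi.single (⟨(j, k), h⟩ : {p : ι × ι // p.1 < p.2}) 1 := by
  funext ⟨⟨a, b⟩, (hab : a < b)⟩
  have hrev : ¬(a = k ∧ b = j) := by rintro ⟨rfl, rfl⟩; exact lt_asymm h hab
  simp only [Pi.sub_apply, pairProd_apply, Pi.single_apply, Subtype.mk.injEq, Prod.mk.injEq]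
  split_ifs <;> simp_all

def offDiagRow (ℓ : ι → ι → ℤ) (i : ι) : ι → ℤ := fun j => if j = i then 0 else ℓ i j

def relatorVec (ℓ : ι → ι → ℤ) (i : ι) : {p : ι × ι // p.1 < p.2} → ℤ :=
  pairProd (Pi.single i 1) (offDiagRow ℓ i) - pairProd (offDiagRow ℓ i) (Pi.single i 1)

lemma relatorVec_apply (ℓ : ι → ι → ℤ) (i a b : ι) (hab : a < b) :
    relatorVec ℓ i ⟨(a, b), hab⟩ = (if a = i then ℓ i b else 0) - (if b = i then ℓ i a else 0) := by
  by_cases ha : a = i <;> by_cases hb : b = i <;>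
    simp [relatorVec, offDiagRow, ha, hb]

lemma sum_relatorVec [Fintype ι] {ℓ : ι → ι → ℤ} (hsym : ∀ i j, i ≠ j → ℓ i j = ℓ j i) :
    ∑ i, relatorVec ℓ i = 0 := by
  funext ⟨⟨a, b⟩, (hab : a < b)⟩
  simp [Finset.sum_apply, relatorVec_apply, Finset.sum_sub_distrib, Finset.sum_ite_eq,
    hsym a b hab.ne]

end PairCoordinates
theorem MonoidHom.map_eq_of_mul_inv_mem_commutator {G A : Type*} [Group G] [CommGroup A]
    (f : G →* A) {a b : G} (h : a * b⁻¹ ∈ commutator G) : f a = f b := by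
  have := Abelianization.commutator_subset_ker f h
  rwa [MonoidHom.mem_ker, map_mul, map_inv, mul_inv_eq_one] at this

theorem MonoidHom.surjective_of_span_eq_top {H A ι : Type*} [Group H] [AddCommGroup A]
    (φ : H →* Multiplicative A) {v : ι → A} (hv : Submodule.span ℤ (Set.range v) = ⊤)
    (hφ : ∀ i, Multiplicative.ofAdd (v i) ∈ φ.range) : Function.Surjective φ := by
  suffices ∀ x ∈ Submodule.span ℤ (Set.range v), Multiplicative.ofAdd x ∈ φ.range from
    fun a => this (Multiplicative.toAdd a) (hv ▸ Submodule.mem_top)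
  intro x hx
  induction hx using Submodule.span_induction with
  | mem x hx => obtain ⟨i, rfl⟩ := hx; exact hφ i
  | zero => exact φ.range.one_mem
  | add x y _ _ hx hy => exact φ.range.mul_mem hx hy
  | smul n x _ hx => exact φ.range.zpow_mem hx n

theorem FreeGroup.lift_single_prod_ofFn_zpow {m : ℕ} (c : Fin m → ℤ) :
    FreeGroup.lift (fun i => Multiplicative.ofAdd (Pi.single i (1 : ℤ)))
      (List.ofFn fun j => FreeGroup.of j ^ c j).prod = Multiplicative.ofAdd c := by
  rw [map_list_prod, List.map_ofFn, List.prod_ofFn]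
  simp only [Function.comp_apply, map_zpow, FreeGroup.lift_apply_of, ← ofAdd_zsmul, ← ofAdd_sum,
    ← Pi.single_smul', smul_eq_mul, mul_one, Finset.univ_sum_single]

theorem FreeGroup.lift_single_eq_offDiagRow {m : ℕ} {ℓ : Fin m → Fin m → ℤ} {i : Fin m}
    {x : FreeGroup (Fin m)}
    (hx : x * ((List.ofFn fun j : Fin m => if j = i then 1 else FreeGroup.of j ^ ℓ i j).prod)⁻¹ ∈
      commutator (FreeGroup (Fin m))) :
    FreeGroup.lift (fun i => Multiplicative.ofAdd (Pi.single i (1 : ℤ))) x =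
      Multiplicative.ofAdd (offDiagRow ℓ i) := by
  rw [MonoidHom.map_eq_of_mul_inv_mem_commutator _ hx, ← FreeGroup.lift_single_prod_ofFn_zpow]
  congr
  funext j
  by_cases hj : j = i <;> simp [offDiagRow, hj]

theorem Nat.sub_one_choose_two_add_le (n : ℕ) : (n - 1).choose 2 + (n - 1) ≤ n.choose 2 := by
  rcases n with _ | n
  · simp
  · rw [Nat.add_sub_cancel, Nat.choose_succ_succ' n 1, Nat.choose_one_right, add_comm]

theorem finrank_span_range_relatorVec_add_le {ι : Type*} [Fintype ι] [LinearOrder ι]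
    {ℓ : ι → ι → ℤ} (hsym : ∀ i j, i ≠ j → ℓ i j = ℓ j i) :
    (Fintype.card ι - 1).choose 2 + finrank ℤ (Submodule.span ℤ (Set.range (relatorVec ℓ))) ≤
      finrank ℤ ({p : ι × ι // p.1 < p.2} → ℤ) := by
  rw [Module.finrank_fintype_fun_eq_card, Fintype.card_subtype, Fintype.card_product_filter_lt]
  have := finrank_span_range_le_card_sub_one_of_sum_eq_zero (R := ℤ) (sum_relatorVec hsym)
  have := Nat.sub_one_choose_two_add_le (Fintype.card ι)
  omega

def MilnorQuotient.mk {m : ℕ} (lam : Fin m → FreeGroup (Fin m)) :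
    FreeGroup (Fin m) →* MilnorQuotient lam :=
  QuotientGroup.mk' _

theorem exists_milnorQuotient_hom_heisenberg {m : ℕ} {ℓ : Fin m → Fin m → ℤ}
    {lam : Fin m → FreeGroup (Fin m)}
    (hlam : ∀ i : Fin m,
      lam i * ((List.ofFn fun j : Fin m =>
          if j = i then 1 else FreeGroup.of j ^ ℓ i j).prod)⁻¹ ∈ commutator (FreeGroup (Fin m)))
    {W : Type*} [AddCommGroup W] (L : ({p : Fin m × Fin m // p.1 < p.2} → ℤ) →+ W)
    (hL : ∀ i, L (relatorVec ℓ i) = 0) :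
    ∃ f : MilnorQuotient lam →* Heisenberg (pairProd.compr₂ L), ∀ (j k : Fin m) (hjk : j < k),
      (f ⁅MilnorQuotient.mk lam (.of j), MilnorQuotient.mk lam (.of k)⁆).snd =
        L (Pi.single ⟨(j, k), hjk⟩ 1) := by
  let Φ : FreeGroup (Fin m) →* Heisenberg (pairProd.compr₂ L) :=
    FreeGroup.lift fun i => ⟨Pi.single i 1, 0⟩
  have hΦ_fst : (Heisenberg.fstHom _).comp Φ =
      FreeGroup.lift fun i => Multiplicative.ofAdd (Pi.single i (1 : ℤ)) :=
    FreeGroup.ext_hom _ _ fun _ => rfl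
  have hΦ_lam (i : Fin m) : (Φ (lam i)).fst = offDiagRow ℓ i :=
    congrArg Multiplicative.toAdd (hΦ_fst ▸ FreeGroup.lift_single_eq_offDiagRow (hlam i) :)
  have hker : Subgroup.normalClosure ((Set.range fun i => ⁅FreeGroup.of i, lam i⁆) ∪
      ((⊤ : Subgroup (FreeGroup (Fin m))).lowerCentralSeries 2 : Set (FreeGroup (Fin m)))) ≤
      Φ.ker := by
    refine Subgroup.normalClosure_le_normal ?_
    rintro _ (⟨i, rfl⟩ | hx)
    · rw [SetLike.mem_coe, MonoidHom.mem_ker, map_commutatorElement, Heisenberg.commutator_eq,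
        hΦ_lam]
      refine Heisenberg.ext rfl ?_
      simpa [Φ, relatorVec] using hL i
    · exact Heisenberg.lowerCentralSeries_two_le_ker Φ hx
  refine ⟨QuotientGroup.lift _ Φ hker, fun j k hjk => ?_⟩
  change (Φ ⁅FreeGroup.of j, FreeGroup.of k⁆).snd = _
  rw [map_commutatorElement, Heisenberg.commutator_eq]
  simp [Φ, ← map_sub, pairProd_single_sub_pairProd_single hjk]

theorem milnorQuotient_lcs2_surjects_onto_free_abelian_general (m : ℕ)
    (ℓ : Fin m → Fin m → ℤ) (hsym : ∀ i j : Fin m, i ≠ j → ℓ i j = ℓ j i)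
    (lam : Fin m → FreeGroup (Fin m))
    (hlam : ∀ i : Fin m,
      lam i * ((List.ofFn fun j : Fin m =>
          if j = i then 1 else FreeGroup.of j ^ ℓ i j).prod)⁻¹ ∈
        (⊤ : Subgroup (FreeGroup (Fin m))).lowerCentralSeries 1) :
    ∃ φ : ((⊤ : Subgroup (MilnorQuotient lam)).lowerCentralSeries 1) →*
        Multiplicative (Fin ((m - 1) * (m - 2) / 2) → ℤ),
      Function.Surjective φ := by
  have hN : (m - 1) * (m - 2) / 2 = (m - 1).choose 2 := by rw [Nat.choose_two_right, Nat.sub_sub]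
  obtain ⟨L, hL, hrel⟩ :=
    (Submodule.span ℤ (Set.range (relatorVec ℓ))).exists_surjective_linearMap_le_ker
      (N := (m - 1) * (m - 2) / 2)
      (by simpa only [hN, Fintype.card_fin] using finrank_span_range_relatorVec_add_le hsym)
  obtain ⟨f, hf⟩ := exists_milnorQuotient_hom_heisenberg hlam L.toAddMonoidHom
    fun i => hrel (Submodule.subset_span ⟨i, rfl⟩)
  refine ⟨Heisenberg.sndOnCommutator f,
    MonoidHom.surjective_of_span_eq_top _ (v := L ∘ Pi.basisFun ℤ _) ?_ ?_⟩
  · rw [Set.range_comp, Submodule.span_image, Module.Basis.span_eq, Submodule.map_top,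
      LinearMap.range_eq_top.mpr hL]
  · rintro ⟨⟨j, k⟩, hjk⟩
    refine ⟨⟨⁅MilnorQuotient.mk lam (.of j), MilnorQuotient.mk lam (.of k)⁆,
      Subgroup.commutator_mem_commutator (Subgroup.mem_top _) (Subgroup.mem_top _)⟩, ?_⟩
    simp only [Function.comp_apply, Pi.basisFun_apply]
    exact congrArg Multiplicative.ofAdd (hf j k hjk)

/-- If `m ≥ 2`, `ℓ i j` is symmetric, and each `λ i` is congruent to
`∏_{j ≠ i} x_j^(ℓ i j)` (in increasing order of `j`) modulo `γ₂(F)`, then the commutator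
subgroup `γ₂(π)` of `π = ⟨x_1,…,x_m ∣ [x_i,λ_i], γ₃(F)⟩` surjects onto the free abelian
group `ℤ^((m-1)(m-2)/2)`. -/
theorem milnorQuotient_lcs2_surjects_onto_free_abelian (m : ℕ) (hm : 2 ≤ m)
    (ℓ : Fin m → Fin m → ℤ) (hsym : ∀ i j : Fin m, i ≠ j → ℓ i j = ℓ j i)
    (lam : Fin m → FreeGroup (Fin m))
    (hlam : ∀ i : Fin m,
      lam i * ((List.ofFn fun j : Fin m =>
          if j = i then 1 else FreeGroup.of j ^ ℓ i j).prod)⁻¹ ∈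
        (⊤ : Subgroup (FreeGroup (Fin m))).lowerCentralSeries 1) :
    ∃ φ : ((⊤ : Subgroup (MilnorQuotient lam)).lowerCentralSeries 1) →*
        Multiplicative (Fin ((m - 1) * (m - 2) / 2) → ℤ),
      Function.Surjective φ :=
  milnorQuotient_lcs2_surjects_onto_free_abelian_general m ℓ hsym lam hlam
end

section
/- Let F = FreeGroup (Fin 2) with generators x₁, x₂, let ℓ ∈ ℤ, and let λ₁, λ₂ ∈ F satisfy λ₁ · x₂^{−ℓ} ∈ γ₂(F) and λ₂ · x₁^{−ℓ} ∈ γ₂(F). Let π be the quotient of F by the normal closure of {⁅x₁, λ₁⁆, ⁅x₂, λ₂⁆} ∪ γ₃(F). Then γ₂(π) is isomorphic, as a group, to the cyclic group ℤ/ℓℤ (that is, to ZMod ℓ.natAbs; in particular it is infinite cyclic when ℓ = 0). Note that γ₃(π) is trivial, so γ₂(π) = γ₂(π)/γ₃(π). -/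
open scoped commutatorElement

/-- The group `π = ⟨x₁, x₂ ∣ [x₁,λ₁], [x₂,λ₂], γ₃(F)⟩`: the quotient of the free group `F`
on two generators by the normal closure of `{⁅x₁,λ₁⁆, ⁅x₂,λ₂⁆}` together with the third
lower central subgroup `γ₃(F) = lowerCentralSeries F 2`. -/
def MilnorQuotient2 (lam₁ lam₂ : FreeGroup (Fin 2)) : Type :=
  FreeGroup (Fin 2) ⧸ Subgroup.normalClosure
    (({⁅FreeGroup.of (0 : Fin 2), lam₁⁆, ⁅FreeGroup.of (1 : Fin 2), lam₂⁆} : Set (FreeGroup (Fin 2))) ∪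
      ((⊤ : Subgroup (FreeGroup (Fin 2))).lowerCentralSeries 2 : Set (FreeGroup (Fin 2))))

instance (lam₁ lam₂ : FreeGroup (Fin 2)) : Group (MilnorQuotient2 lam₁ lam₂) := by
  unfold MilnorQuotient2; infer_instance

/-!
Since `γ₃(π) = 1`, the commutator is bilinear on `π`, so `γ₂(π)` is cyclic, generated by
`c = ⁅x₁, x₂⁆`. As `λ₁ ≡ x₂ ^ ℓ` modulo `γ₂`, the relation `⁅x₁, λ₁⁆ = 1` says `c ^ ℓ = 1`.
Conversely, `x₁ ↦ (1, 0, 0)`, `x₂ ↦ (0, 1, 0)` induces a map from `π` to the Heisenberg group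
over `ℤ/ℓ`: there every commutator is central with `ℓ`-th power `1`, so both relators die, and
`c` goes to the central element `(0, 0, 1)` of order `|ℓ|`. Hence `c` has order exactly `|ℓ|`.
-/

open Subgroup

section ClassTwo

variable {G : Type*} [Group G]

theorem map_mem_top_lowerCentralSeries {H : Type*} [Group H] (f : G →* H) (n : ℕ) {z : G}
    (hz : z ∈ (⊤ : Subgroup G).lowerCentralSeries n) :
    f z ∈ (⊤ : Subgroup H).lowerCentralSeries n :=
  lowerCentralSeries_mono n le_top (map_lowerCentralSeries ⊤ f n ▸ mem_map_of_mem f hz)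

theorem top_lowerCentralSeries_two_eq_bot_iff :
    (⊤ : Subgroup G).lowerCentralSeries 2 = ⊥ ↔ commutator G ≤ center G :=
  commutator_top_right_eq_bot_iff_le_center

theorem commutatorElement_eq_one_of_mem_commutator (hG : commutator G ≤ center G) (g : G)
    {z : G} (hz : z ∈ commutator G) : ⁅g, z⁆ = 1 :=
  commutatorElement_eq_one_iff_mul_comm.mpr (mem_center_iff.mp (hG hz) g)

theorem commutatorElement_mul_right_of_le_center (hG : commutator G ≤ center G) (g h k : G) :
    ⁅g, h * k⁆ = ⁅g, h⁆ * ⁅g, k⁆ := by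
  have hk : h * ⁅g, k⁆ = ⁅g, k⁆ * h :=
    mem_center_iff.mp (hG (commutator_mem_commutator (mem_top g) (mem_top k))) h
  rw [commutatorElement_mul_right_eq_mul_conj, mul_assoc _ h, hk, ← mul_assoc,
    mul_inv_cancel_right]

def commutatorElementRightHom (hG : commutator G ≤ center G) (g : G) : G →* G where
  toFun h := ⁅g, h⁆
  map_one' := commutatorElement_one_right g
  map_mul' := commutatorElement_mul_right_of_le_center hG g

theorem commutatorElement_zpow_right_of_le_center (hG : commutator G ≤ center G) (g h : G)
    (n : ℤ) : ⁅g, h ^ n⁆ = ⁅g, h⁆ ^ n :=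
  map_zpow (commutatorElementRightHom hG g) h n

theorem commutatorElement_eq_zpow_of_mul_zpow_neg_mem (hG : commutator G ≤ center G)
    (x : G) {y w : G} {n : ℤ} (hw : w * y ^ (-n) ∈ commutator G) :
    ⁅x, w⁆ = ⁅x, y⁆ ^ n :=
  calc ⁅x, w⁆ = ⁅x, w * y ^ (-n)⁆ * ⁅x, y ^ n⁆ := by
        rw [← commutatorElement_mul_right_of_le_center hG, zpow_neg, inv_mul_cancel_right]
    _ = ⁅x, y⁆ ^ n := by
        rw [commutatorElement_eq_one_of_mem_commutator hG x hw, one_mul,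
          commutatorElement_zpow_right_of_le_center hG]

theorem commutatorElement_mem_of_closure_eq_top (hG : commutator G ≤ center G) {S : Set G}
    (hS : closure S = ⊤) {K : Subgroup G} {g : G} (hgS : ∀ s ∈ S, ⁅g, s⁆ ∈ K) (h : G) :
    ⁅g, h⁆ ∈ K :=
  ((closure_le (K.comap (commutatorElementRightHom hG g))).mpr hgS) (hS ▸ mem_top h)

theorem commutator_eq_zpowers_of_closure_pair_eq_top (hG : commutator G ≤ center G) {x y : G}
    (hxy : closure {x, y} = ⊤) : commutator G = zpowers ⁅x, y⁆ := by
  refine le_antisymm ?_ (zpowers_le.mpr (commutator_mem_commutator (mem_top x) (mem_top y)))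
  have hgen : ∀ s ∈ ({x, y} : Set G), ∀ g, ⁅s, g⁆ ∈ zpowers ⁅x, y⁆ := by
    rintro s (rfl | rfl) <;> refine commutatorElement_mem_of_closure_eq_top hG hxy ?_ <;>
      rintro t (rfl | rfl)
    · simp
    · exact mem_zpowers _
    · rw [← inv_mem_iff, commutatorElement_inv]; exact mem_zpowers _
    · simp
  rw [_root_.commutator_def, commutator_le]
  rintro g - h -
  refine commutatorElement_mem_of_closure_eq_top hG hxy (fun s hs => ?_) h
  rw [← inv_mem_iff, commutatorElement_inv]
  exact hgen s hs g

end ClassTwo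

local notation "x₁" => FreeGroup.of (0 : Fin 2)
local notation "x₂" => FreeGroup.of (1 : Fin 2)

/-- Coordinates `(a, b, c)` of the unitriangular matrix `[[1, a, c], [0, 1, b], [0, 0, 1]]`. -/
@[ext]
structure Heisenberg_s9 (R : Type*) where
  a : R
  b : R
  c : R

namespace Heisenberg_s9

variable {R : Type*} [CommRing R]

instance : Mul (Heisenberg_s9 R) := ⟨fun x y => ⟨x.a + y.a, x.b + y.b, x.c + y.c + x.a * y.b⟩⟩
instance : One (Heisenberg_s9 R) := ⟨⟨0, 0, 0⟩⟩
instance : Inv (Heisenberg_s9 R) := ⟨fun x => ⟨-x.a, -x.b, x.a * x.b - x.c⟩⟩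

@[simp] theorem mul_a (x y : Heisenberg_s9 R) : (x * y).a = x.a + y.a := rfl
@[simp] theorem mul_b (x y : Heisenberg_s9 R) : (x * y).b = x.b + y.b := rfl
@[simp] theorem mul_c (x y : Heisenberg_s9 R) : (x * y).c = x.c + y.c + x.a * y.b := rfl
@[simp] theorem one_a : (1 : Heisenberg_s9 R).a = 0 := rfl
@[simp] theorem one_b : (1 : Heisenberg_s9 R).b = 0 := rfl
@[simp] theorem one_c : (1 : Heisenberg_s9 R).c = 0 := rfl
@[simp] theorem inv_a (x : Heisenberg_s9 R) : x⁻¹.a = -x.a := rfl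
@[simp] theorem inv_b (x : Heisenberg_s9 R) : x⁻¹.b = -x.b := rfl
@[simp] theorem inv_c (x : Heisenberg_s9 R) : x⁻¹.c = x.a * x.b - x.c := rfl

instance : Group (Heisenberg_s9 R) where
  mul_assoc x y z := by ext <;> simp <;> ring
  one_mul x := by ext <;> simp
  mul_one x := by ext <;> simp
  inv_mul_cancel x := by ext <;> simp

theorem commutatorElement_eq (g h : Heisenberg_s9 R) : ⁅g, h⁆ = ⟨0, 0, g.a * h.b - h.a * g.b⟩ := by
  ext <;> simp [commutatorElement_def]
  ring

theorem commutator_le_center : commutator (Heisenberg_s9 R) ≤ center (Heisenberg_s9 R) := by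
  rw [_root_.commutator_def, commutator_le]
  intro g _ h _
  rw [mem_center_iff]
  intro k
  ext <;> simp [commutatorElement_eq]
  ring

def ofCenter : Multiplicative R →* Heisenberg_s9 R where
  toFun t := ⟨0, 0, t.toAdd⟩
  map_one' := rfl
  map_mul' x y := by ext <;> simp

theorem ofCenter_injective : Function.Injective (ofCenter : Multiplicative R →* Heisenberg_s9 R) :=
  fun _ _ h => congrArg Heisenberg_s9.c h

theorem orderOf_commutatorElement :
    orderOf ⁅(⟨1, 0, 0⟩ : Heisenberg_s9 R), (⟨0, 1, 0⟩ : Heisenberg_s9 R)⁆ = addOrderOf (1 : R) := by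
  have h : ⁅(⟨1, 0, 0⟩ : Heisenberg_s9 R), (⟨0, 1, 0⟩ : Heisenberg_s9 R)⁆ = ofCenter (.ofAdd 1) := by
    simp [commutatorElement_eq, ofCenter]
  rw [h, orderOf_injective _ ofCenter_injective, orderOf_ofAdd_eq_addOrderOf]

theorem commutatorElement_zpow_natAbs_eq_one (ℓ : ℤ) (g h : Heisenberg_s9 (ZMod ℓ.natAbs)) :
    ⁅g, h⁆ ^ ℓ = 1 := by
  have hℓ : (ℓ : ZMod ℓ.natAbs) = 0 :=
    (ZMod.intCast_zmod_eq_zero_iff_dvd _ _).mpr (Int.natCast_dvd.mpr dvd_rfl)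
  have hgh : ⁅g, h⁆ = ofCenter (.ofAdd (g.a * h.b - h.a * g.b)) := commutatorElement_eq g h
  rw [hgh, ← map_zpow, ← ofAdd_zsmul, zsmul_eq_mul, hℓ, zero_mul, ofAdd_zero, map_one]

theorem map_commutatorElement_eq_one {G : Type*} [Group G] {ℓ : ℤ}
    (f : G →* Heisenberg_s9 (ZMod ℓ.natAbs)) (x : G) {y w : G}
    (hw : w * y ^ (-ℓ) ∈ commutator G) : f ⁅x, w⁆ = 1 := by
  have hfw : f w * f y ^ (-ℓ) ∈ commutator _ := by
    simpa only [map_mul, map_zpow, top_lowerCentralSeries_one] using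
      map_mem_top_lowerCentralSeries f 1 hw
  rw [map_commutatorElement,
    commutatorElement_eq_zpow_of_mul_zpow_neg_mem commutator_le_center _ hfw,
    commutatorElement_zpow_natAbs_eq_one]

variable (R) in
def freeGroupHom : FreeGroup (Fin 2) →* Heisenberg_s9 R := FreeGroup.lift ![⟨1, 0, 0⟩, ⟨0, 1, 0⟩]

variable (R) in
theorem freeGroupHom_commutatorElement :
    freeGroupHom R ⁅x₁, x₂⁆ = ⁅(⟨1, 0, 0⟩ : Heisenberg_s9 R), (⟨0, 1, 0⟩ : Heisenberg_s9 R)⁆ := by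
  simp [freeGroupHom, map_commutatorElement]

end Heisenberg_s9

namespace MilnorQuotient2

variable {lam₁ lam₂ : FreeGroup (Fin 2)}

variable (lam₁ lam₂) in
def mk : FreeGroup (Fin 2) →* MilnorQuotient2 lam₁ lam₂ := QuotientGroup.mk' _

theorem mk_surjective : Function.Surjective (mk lam₁ lam₂) := QuotientGroup.mk'_surjective _

theorem mk_eq_one_of_mem {w : FreeGroup (Fin 2)}
    (hw : w ∈ ({⁅x₁, lam₁⁆, ⁅x₂, lam₂⁆} : Set (FreeGroup (Fin 2))) ∪
      ((⊤ : Subgroup (FreeGroup (Fin 2))).lowerCentralSeries 2 : Set (FreeGroup (Fin 2)))) :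
    mk lam₁ lam₂ w = 1 :=
  (QuotientGroup.eq_one_iff w).mpr (subset_normalClosure hw)

theorem top_lowerCentralSeries_two_eq_bot :
    (⊤ : Subgroup (MilnorQuotient2 lam₁ lam₂)).lowerCentralSeries 2 = ⊥ := by
  rw [← map_top_of_surjective _ mk_surjective, ← map_lowerCentralSeries, Subgroup.map_eq_bot_iff]
  exact fun w hw => mk_eq_one_of_mem (.inr hw)

theorem commutator_le_center :
    commutator (MilnorQuotient2 lam₁ lam₂) ≤ center (MilnorQuotient2 lam₁ lam₂) :=
  top_lowerCentralSeries_two_eq_bot_iff.mp top_lowerCentralSeries_two_eq_bot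

theorem closure_mk_pair_eq_top : closure {mk lam₁ lam₂ x₁, mk lam₁ lam₂ x₂} = ⊤ := by
  have hF : closure {x₁, x₂} = ⊤ := by
    refine eq_top_iff.mpr (FreeGroup.closure_range_of (Fin 2) ▸ closure_mono ?_)
    rintro _ ⟨i, rfl⟩
    fin_cases i <;> simp
  rw [← Set.image_pair, ← MonoidHom.map_closure, hF, map_top_of_surjective _ mk_surjective]

def lift {H : Type*} [Group H] (hH : commutator H ≤ center H) (f : FreeGroup (Fin 2) →* H)
    (h₁ : f ⁅x₁, lam₁⁆ = 1) (h₂ : f ⁅x₂, lam₂⁆ = 1) : MilnorQuotient2 lam₁ lam₂ →* H :=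
  QuotientGroup.lift _ f <| normalClosure_le_normal <| by
    rintro w ((rfl | rfl) | hw)
    · exact MonoidHom.mem_ker.mpr h₁
    · exact MonoidHom.mem_ker.mpr h₂
    · have hfw := map_mem_top_lowerCentralSeries f 2 hw
      rwa [top_lowerCentralSeries_two_eq_bot_iff.mpr hH] at hfw

theorem lift_mk {H : Type*} [Group H] (hH : commutator H ≤ center H) (f : FreeGroup (Fin 2) →* H)
    (h₁ : f ⁅x₁, lam₁⁆ = 1) (h₂ : f ⁅x₂, lam₂⁆ = 1) (w : FreeGroup (Fin 2)) :
    lift hH f h₁ h₂ (mk lam₁ lam₂ w) = f w :=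
  rfl

variable {ℓ : ℤ}

theorem commutatorElement_mk_zpow_eq_one
    (h₁ : lam₁ * x₂ ^ (-ℓ) ∈ commutator (FreeGroup (Fin 2))) :
    ⁅mk lam₁ lam₂ x₁, mk lam₁ lam₂ x₂⁆ ^ ℓ = 1 := by
  have hmk : mk lam₁ lam₂ lam₁ * mk lam₁ lam₂ x₂ ^ (-ℓ) ∈ commutator _ := by
    simpa only [map_mul, map_zpow, top_lowerCentralSeries_one] using
      map_mem_top_lowerCentralSeries (mk lam₁ lam₂) 1 h₁
  rw [← commutatorElement_eq_zpow_of_mul_zpow_neg_mem commutator_le_center _ hmk,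
    ← map_commutatorElement, mk_eq_one_of_mem (.inl (.inl rfl))]

theorem orderOf_commutatorElement_mk
    (h₁ : lam₁ * x₂ ^ (-ℓ) ∈ commutator (FreeGroup (Fin 2)))
    (h₂ : lam₂ * x₁ ^ (-ℓ) ∈ commutator (FreeGroup (Fin 2))) :
    orderOf ⁅mk lam₁ lam₂ x₁, mk lam₁ lam₂ x₂⁆ = ℓ.natAbs := by
  let ψ := lift Heisenberg_s9.commutator_le_center (Heisenberg_s9.freeGroupHom (ZMod ℓ.natAbs))
    (Heisenberg_s9.map_commutatorElement_eq_one _ _ h₁)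
    (Heisenberg_s9.map_commutatorElement_eq_one _ _ h₂)
  have hψ := orderOf_map_dvd ψ ⁅mk lam₁ lam₂ x₁, mk lam₁ lam₂ x₂⁆
  rw [← map_commutatorElement, lift_mk, Heisenberg_s9.freeGroupHom_commutatorElement,
    Heisenberg_s9.orderOf_commutatorElement, ZMod.addOrderOf_one] at hψ
  exact Nat.dvd_antisymm
    (Int.natCast_dvd.mp (orderOf_dvd_iff_zpow_eq_one.mpr (commutatorElement_mk_zpow_eq_one h₁)))
    hψ

end MilnorQuotient2

open MilnorQuotient2 in
/-- If `λ₁ ≡ x₂^ℓ` and `λ₂ ≡ x₁^ℓ` modulo `γ₂(F)`, then the commutator subgroup `γ₂(π)` of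
`π = ⟨x₁,x₂ ∣ [x₁,λ₁], [x₂,λ₂], γ₃(F)⟩` is isomorphic to the cyclic group `ℤ/ℓℤ`
(infinite cyclic when `ℓ = 0`). -/
theorem milnorQuotient2_lcs2_iso_zmod (ℓ : ℤ) (lam₁ lam₂ : FreeGroup (Fin 2))
    (h₁ : lam₁ * FreeGroup.of (1 : Fin 2) ^ (-ℓ) ∈ (⊤ : Subgroup (FreeGroup (Fin 2))).lowerCentralSeries 1)
    (h₂ : lam₂ * FreeGroup.of (0 : Fin 2) ^ (-ℓ) ∈ (⊤ : Subgroup (FreeGroup (Fin 2))).lowerCentralSeries 1) :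
    Nonempty (((⊤ : Subgroup (MilnorQuotient2 lam₁ lam₂)).lowerCentralSeries 1) ≃*
      Multiplicative (ZMod ℓ.natAbs)) := by
  have hγ₂ : (⊤ : Subgroup (MilnorQuotient2 lam₁ lam₂)).lowerCentralSeries 1 =
      zpowers ⁅mk lam₁ lam₂ x₁, mk lam₁ lam₂ x₂⁆ :=
    commutator_eq_zpowers_of_closure_pair_eq_top commutator_le_center closure_mk_pair_eq_top
  rw [hγ₂, ← orderOf_commutatorElement_mk h₁ h₂, ← Nat.card_zpowers]
  exact ⟨(zmodCyclicMulEquiv inferInstance).symm⟩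
end
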